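/- arXiv:1810.04663 — 4 statements merged into one kernel-verified Lean document; each statement's English description precedes it below -/
import Mathlib

section
/- Let μ > ν₁ + ν₂ ≥ 0 with ν₁ > ν₂ ≥ 0, and let Y₀, Y₁, Y₂, … be a sequence of reals in [0,1]. Define Q_v = ∑_{i≥0} Y_i·(μ_v^i/i!)·e^{−μ_v} for μ_v ∈ {μ, ν₁, ν₂}. Then ν₁·Q_{ν₂}e^{ν₂} − ν₂·Q_{ν₁}e^{ν₁} ≤ (ν₁ − ν₂)·Y₀, i.e. Y₀ ≥ (ν₁·Q_{ν₂}e^{ν₂} − ν₂·Q_{ν₁}e^{ν₁})/(ν₁ − ν₂). -/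
theorem decoy_vacuum_yield_bound (μ ν1 ν2 : ℝ) (Y : ℕ → ℝ) (Qν1 Qν2 : ℝ)
    (hν2 : 0 ≤ ν2) (hν : ν2 < ν1) (hμ : ν1 + ν2 < μ)
    (hY : ∀ i, 0 ≤ Y i ∧ Y i ≤ 1)
    (hQ1 : HasSum (fun i : ℕ => Y i * ν1 ^ i / (Nat.factorial i) * Real.exp (-ν1)) Qν1)
    (hQ2 : HasSum (fun i : ℕ => Y i * ν2 ^ i / (Nat.factorial i) * Real.exp (-ν2)) Qν2) :
    Y 0 ≥ (ν1 * Qν2 * Real.exp ν2 - ν2 * Qν1 * Real.exp ν1) / (ν1 - ν2) := by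
  have h1 : HasSum (fun i : ℕ => Y i * ν1 ^ i / (Nat.factorial i)) (Qν1 * Real.exp ν1) := by
    have := hQ1.mul_right (Real.exp ν1)
    convert this using 2 with i
    · rfl
    rw [mul_assoc, ← Real.exp_add, neg_add_cancel, Real.exp_zero, mul_one]
  have h2 : HasSum (fun i : ℕ => Y i * ν2 ^ i / (Nat.factorial i)) (Qν2 * Real.exp ν2) := by
    have := hQ2.mul_right (Real.exp ν2)
    convert this using 2 with i
    · rfl
    rw [mul_assoc, ← Real.exp_add, neg_add_cancel, Real.exp_zero, mul_one]
  have h : HasSum (fun i : ℕ => ν1 * (Y i * ν2 ^ i / (Nat.factorial i))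
      - ν2 * (Y i * ν1 ^ i / (Nat.factorial i)))
      (ν1 * (Qν2 * Real.exp ν2) - ν2 * (Qν1 * Real.exp ν1)) :=
    (h2.mul_left ν1).sub (h1.mul_left ν2)
  have hg : HasSum (fun i : ℕ => if i = 0 then Y 0 * (ν1 - ν2) else 0)
      (Y 0 * (ν1 - ν2)) := hasSum_ite_eq 0 _
  have hle : ν1 * (Qν2 * Real.exp ν2) - ν2 * (Qν1 * Real.exp ν1) ≤ Y 0 * (ν1 - ν2) := by
    refine hasSum_le ?_ h hg
    intro i
    match i with
    | 0 => simp; ring_nf; exact le_rfl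
    | (k+1) =>
      simp only [Nat.succ_ne_zero, if_false]
      have hYk := (hY (k+1)).1
      have hfac : (0:ℝ) < (Nat.factorial (k+1) : ℝ) := by positivity
      have hkey : ν1 * ν2 ^ (k+1) ≤ ν2 * ν1 ^ (k+1) := by
        have hp : ν2 ^ k ≤ ν1 ^ k := pow_le_pow_left₀ hν2 hν.le k
        calc ν1 * ν2 ^ (k+1) = (ν1 * ν2) * ν2 ^ k := by ring
          _ ≤ (ν1 * ν2) * ν1 ^ k := by
              apply mul_le_mul_of_nonneg_left hp
              exact mul_nonneg (le_of_lt (lt_of_le_of_lt hν2 hν)) hν2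
          _ = ν2 * ν1 ^ (k+1) := by ring
      have : ν1 * (Y (k+1) * ν2 ^ (k+1)) ≤ ν2 * (Y (k+1) * ν1 ^ (k+1)) := by
        nlinarith
      rw [sub_nonpos]
      rw [mul_div_assoc', mul_div_assoc']
      exact div_le_div_of_nonneg_right (by nlinarith) hfac.le |>.trans (le_refl _)
  rw [ge_iff_le, div_le_iff₀ (sub_pos.2 hν)]
  nlinarith [hle]
end

section
/- Let ν₁ > ν₂ ≥ 0 and let (Y_i)_{i≥0} and (e_i)_{i≥0} be sequences of nonnegative reals with the series E_v Q_v = ∑_{i≥0} e_i Y_i (ν_v^i/i!) e^{−ν_v} convergent for v ∈ {1,2}. Then E₁Q₁e^{ν₁} − E₂Q₂e^{ν₂} ≥ e₁Y₁(ν₁ − ν₂). -/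
theorem decoy_single_photon_error_bound (ν1 ν2 : ℝ) (Y e : ℕ → ℝ) (EQ1 EQ2 : ℝ)
    (hν2 : 0 ≤ ν2) (hν : ν2 < ν1)
    (hY : ∀ i, 0 ≤ Y i) (he : ∀ i, 0 ≤ e i)
    (h1 : HasSum (fun i : ℕ => e i * Y i * ν1 ^ i / (Nat.factorial i) * Real.exp (-ν1)) EQ1)
    (h2 : HasSum (fun i : ℕ => e i * Y i * ν2 ^ i / (Nat.factorial i) * Real.exp (-ν2)) EQ2) :
    EQ1 * Real.exp ν1 - EQ2 * Real.exp ν2 ≥ e 1 * Y 1 * (ν1 - ν2) := by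
  have g1 : HasSum (fun i : ℕ => e i * Y i * ν1 ^ i / (Nat.factorial i)) (EQ1 * Real.exp ν1) := by
    have := h1.mul_right (Real.exp ν1)
    simpa [mul_assoc, ← Real.exp_add] using this
  have g2 : HasSum (fun i : ℕ => e i * Y i * ν2 ^ i / (Nat.factorial i)) (EQ2 * Real.exp ν2) := by
    have := h2.mul_right (Real.exp ν2)
    simpa [mul_assoc, ← Real.exp_add] using this
  have hdiff := g1.sub g2
  have key := le_hasSum hdiff 1 ?_
  · calc e 1 * Y 1 * (ν1 - ν2)
        = e 1 * Y 1 * ν1 ^ 1 / (Nat.factorial 1) - e 1 * Y 1 * ν2 ^ 1 / (Nat.factorial 1) := by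
          simp [Nat.factorial]; ring
      _ ≤ EQ1 * Real.exp ν1 - EQ2 * Real.exp ν2 := key
  · intro i _
    have hpow : ν2 ^ i ≤ ν1 ^ i := pow_le_pow_left₀ hν2 hν.le i
    have hnn : 0 ≤ e i * Y i := mul_nonneg (he i) (hY i)
    have : e i * Y i * ν2 ^ i ≤ e i * Y i * ν1 ^ i := mul_le_mul_of_nonneg_left hpow hnn
    have hfac : (0:ℝ) < (Nat.factorial i : ℝ) := by positivity
    simp only [sub_nonneg]
    gcongr
end

section
/- Let 0 ≤ ν₂ < ν₁ and ν₁ + ν₂ < μ, and let (Y_i)_{i≥0} be nonnegative reals. Define Q_v e^{μ_v} = ∑_{i≥0} Y_i μ_v^i/i! for μ_v ∈ {μ, ν₁, ν₂}. Then Y₁ ≥ (μ/(μν₁ − μν₂ − ν₁² + ν₂²))·[Q_{ν₁}e^{ν₁} − Q_{ν₂}e^{ν₂} − ((ν₁² − ν₂²)/μ²)(Q_μ e^{μ} − Y₀)]. -/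
lemma pow_diff_le (a b : ℝ) (hb : 0 ≤ b) (hab : b ≤ a) :
    ∀ n : ℕ, a ^ (n + 2) - b ^ (n + 2) ≤ (a ^ 2 - b ^ 2) * (a + b) ^ n := by
  intro n
  induction n with
  | zero => simp
  | succ m ih =>
    have hpow : b ^ (m + 1) ≤ (a + b) ^ (m + 1) :=
      pow_le_pow_left₀ hb (by linarith) _
    have h1 : 0 ≤ (a - b) * b * ((a + b) ^ (m + 1) - b ^ (m + 1)) := by
      apply mul_nonneg (mul_nonneg (by linarith) hb) (by linarith)
    have ha : 0 ≤ a := hb.trans hab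
    calc a ^ (m + 1 + 2) - b ^ (m + 1 + 2)
        = a * (a ^ (m + 2) - b ^ (m + 2)) + b ^ (m + 2) * (a - b) := by ring
      _ ≤ a * ((a ^ 2 - b ^ 2) * (a + b) ^ m) + b ^ (m + 2) * (a - b) := by
          nlinarith [mul_le_mul_of_nonneg_left ih ha]
      _ ≤ (a ^ 2 - b ^ 2) * (a + b) ^ (m + 1) := by
          have e1 : (a + b) ^ (m + 1) = (a + b) * (a + b) ^ m := by ring
          have e3 : b ^ (m + 1) = b * b ^ m := by ring
          have e2 : b ^ (m + 2) = b ^ 2 * b ^ m := by ring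
          rw [e1, e3] at h1
          rw [e1, e2]
          nlinarith [h1]

theorem decoy_single_photon_yield_bound (μ ν1 ν2 : ℝ) (Y : ℕ → ℝ) (Qμ Qν1 Qν2 : ℝ)
    (hν2 : 0 ≤ ν2) (hν : ν2 < ν1) (hμ : ν1 + ν2 < μ)
    (hY : ∀ i, 0 ≤ Y i)
    (hQμ : HasSum (fun i : ℕ => Y i * μ ^ i / (Nat.factorial i) * Real.exp (-μ)) Qμ)
    (hQ1 : HasSum (fun i : ℕ => Y i * ν1 ^ i / (Nat.factorial i) * Real.exp (-ν1)) Qν1)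
    (hQ2 : HasSum (fun i : ℕ => Y i * ν2 ^ i / (Nat.factorial i) * Real.exp (-ν2)) Qν2) :
    Y 1 ≥ μ / (μ * ν1 - μ * ν2 - ν1 ^ 2 + ν2 ^ 2) *
      (Qν1 * Real.exp ν1 - Qν2 * Real.exp ν2
        - (ν1 ^ 2 - ν2 ^ 2) / μ ^ 2 * (Qμ * Real.exp μ - Y 0)) := by
  have hμpos : 0 < μ := lt_of_le_of_lt (by linarith) hμ
  have hD : 0 < μ * ν1 - μ * ν2 - ν1 ^ 2 + ν2 ^ 2 := by nlinarith
  set r : ℝ := (ν1 ^ 2 - ν2 ^ 2) / μ ^ 2 with hr_def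
  have hr : r * μ ^ 2 = ν1 ^ 2 - ν2 ^ 2 :=
    div_mul_cancel₀ _ (by positivity)
  -- convert the HasSum hypotheses
  have conv : ∀ (v Q : ℝ),
      HasSum (fun i : ℕ => Y i * v ^ i / (Nat.factorial i) * Real.exp (-v)) Q →
      HasSum (fun i : ℕ => Y i * v ^ i / (Nat.factorial i)) (Q * Real.exp v) := by
    intro v Q h
    have := h.mul_right (Real.exp v)
    simpa [mul_assoc, ← Real.exp_add] using this
  have hSμ := conv μ Qμ hQμ
  have hS1 := conv ν1 Qν1 hQ1
  have hS2 := conv ν2 Qν2 hQ2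
  set Sμ := Qμ * Real.exp μ
  set S1 := Qν1 * Real.exp ν1
  set S2 := Qν2 * Real.exp ν2
  have hH : HasSum (fun i : ℕ => r * (Y i * μ ^ i / (Nat.factorial i))
      - Y i * ν1 ^ i / (Nat.factorial i) + Y i * ν2 ^ i / (Nat.factorial i))
      (r * Sμ - S1 + S2) := ((hSμ.mul_left r).sub hS1).add hS2
  have key : r * Y 0 + (r * (Y 1 * μ) - Y 1 * ν1 + Y 1 * ν2) ≤ r * Sμ - S1 + S2 := by
    have hnn : ∀ i ∉ ({0, 1} : Finset ℕ),
        0 ≤ r * (Y i * μ ^ i / (Nat.factorial i))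
          - Y i * ν1 ^ i / (Nat.factorial i) + Y i * ν2 ^ i / (Nat.factorial i) := by
      intro i hi
      simp only [Finset.mem_insert, Finset.mem_singleton] at hi
      obtain ⟨n, rfl⟩ : ∃ n, i = n + 2 := by
        refine ⟨i - 2, ?_⟩
        omega
      have hbr : ν1 ^ (n + 2) - ν2 ^ (n + 2) ≤ r * μ ^ (n + 2) := by
        have h1 := pow_diff_le ν1 ν2 hν2 hν.le n
        have h2 : (ν1 + ν2) ^ n ≤ μ ^ n := pow_le_pow_left₀ (by linarith) hμ.le n
        have h3 : 0 ≤ ν1 ^ 2 - ν2 ^ 2 := by nlinarith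
        have h4 : (ν1 ^ 2 - ν2 ^ 2) * (ν1 + ν2) ^ n ≤ (ν1 ^ 2 - ν2 ^ 2) * μ ^ n :=
          mul_le_mul_of_nonneg_left h2 h3
        have h5 : r * μ ^ (n + 2) = (ν1 ^ 2 - ν2 ^ 2) * μ ^ n := by
          rw [← hr]; ring
        linarith
      have hfac : (0:ℝ) < (Nat.factorial (n + 2) : ℝ) := by positivity
      have hYn := hY (n + 2)
      have : 0 ≤ Y (n + 2) * (r * μ ^ (n + 2) - ν1 ^ (n + 2) + ν2 ^ (n + 2)) / (Nat.factorial (n + 2)) := by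
        apply div_nonneg _ hfac.le
        exact mul_nonneg hYn (by linarith)
      calc (0:ℝ) ≤ Y (n + 2) * (r * μ ^ (n + 2) - ν1 ^ (n + 2) + ν2 ^ (n + 2)) / (Nat.factorial (n + 2)) := this
        _ = r * (Y (n + 2) * μ ^ (n + 2) / (Nat.factorial (n + 2)))
          - Y (n + 2) * ν1 ^ (n + 2) / (Nat.factorial (n + 2))
          + Y (n + 2) * ν2 ^ (n + 2) / (Nat.factorial (n + 2)) := by ring
    have := sum_le_hasSum ({0, 1} : Finset ℕ) hnn hH
    simpa [Finset.sum_insert, Nat.factorial] using this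
  rw [ge_iff_le, div_mul_eq_mul_div, div_le_iff₀ hD]
  have key2 := mul_le_mul_of_nonneg_left key hμpos.le
  have hr1 : r * μ ^ 2 * Y 1 = (ν1 ^ 2 - ν2 ^ 2) * Y 1 := by rw [hr]
  nlinarith [key2, hr1]
end

section
/- For i ≥ 2 and reals 0 ≤ ν₂ < ν₁ with ν₁ + ν₂ ≤ μ, one has ν₁^i − ν₂^i ≤ (ν₁² − ν₂²)·μ^{i−2}. -/
theorem decoy_power_lemma (μ ν1 ν2 : ℝ) (i : ℕ)
    (hi : 2 ≤ i) (hν2 : 0 ≤ ν2) (hν : ν2 < ν1) (hμ : ν1 + ν2 ≤ μ) :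
    ν1 ^ i - ν2 ^ i ≤ (ν1 ^ 2 - ν2 ^ 2) * μ ^ (i - 2) := by
  have hμ0 : 0 ≤ μ := le_trans (by linarith) hμ
  induction i, hi using Nat.le_induction with
  | base => simp
  | succ n hn ih =>
    have h1 : n + 1 - 2 = (n - 2) + 1 := by omega
    have h2 : ν2 ^ (n-1) ≤ μ ^ (n-1) := pow_le_pow_left₀ hν2 (by linarith) _
    have h3 : n = (n-1) + 1 := by omega
    have h4 : n - 1 = (n-2) + 1 := by omega
    have hmp : 0 ≤ μ ^ (n-2) := pow_nonneg hμ0 _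
    have hνp : 0 ≤ ν2 ^ (n-2) := pow_nonneg hν2 _
    rw [h1]
    have key : ν1 ^ (n+1) - ν2 ^ (n+1) = ν1 * (ν1^n - ν2^n) + (ν1 - ν2) * ν2^n := by
      ring
    rw [key]
    have hps : μ ^ (n - 2 + 1) = μ ^ (n-2) * μ := pow_succ μ (n-2)
    rw [hps]
    have h5 : ν2 ^ n ≤ ν2^2 * μ^(n-2) := by
      calc ν2 ^ n = ν2^2 * ν2^(n-2) := by rw [← pow_add]; congr 1; omega
      _ ≤ ν2^2 * μ^(n-2) := by
          have := pow_le_pow_left₀ hν2 (by linarith : ν2 ≤ μ) (n-2)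
          nlinarith [sq_nonneg ν2]
    nlinarith [mul_le_mul_of_nonneg_left ih (by linarith : (0:ℝ) ≤ ν1),
      mul_le_mul_of_nonneg_left h5 (by linarith : (0:ℝ) ≤ ν1 - ν2),
      mul_nonneg (mul_nonneg (mul_nonneg (by linarith : (0:ℝ) ≤ ν1 - ν2) (by linarith : (0:ℝ) ≤ ν1)) hν2) hmp,
      mul_nonneg (mul_nonneg (mul_nonneg (by linarith : (0:ℝ) ≤ ν1 - ν2) (by linarith : (0:ℝ) ≤ ν1 + ν2)) (by linarith : (0:ℝ) ≤ μ - (ν1+ν2))) hmp]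
end
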